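/- For real numbers a > 0, b > 0, the Fourier transform of h₀(t) = (t + ib)^{-1} e^{-a²t²}, defined by ĥ₀(w) = ∫_{-∞}^{∞} h₀(t) e^{2πitw} dt, equals -iπ e^{a²b²} e^{2πbw} erfc(ab + πw/a), where erfc(x) = (2/√π) ∫_x^∞ e^{-u²} du is the complementary error function. -/

import Mathlib

/-!
Write `(t + ib)⁻¹ = -i ∫₀^∞ e^{(it - b)s} ds`. The resulting double integral converges absolutely
(its integrand has modulus `e^{-a²t²} e^{-bs}`), so the integrals may be swapped; the inner
integral over `t` is the Fourier transform of a Gaussian, and completing the square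
`-bs - (s + 2πw)²/(4a²) = a²b² + 2πbw - (s/(2a) + ab + πw/a)²` turns the outer one into `erfc`.
-/

noncomputable section
open Complex Real MeasureTheory

/-- The complementary error function `erfc(x) = (2/√π) ∫_x^∞ e^{-u²} du`. -/
def erfc (x : ℝ) : ℝ := 2 / Real.sqrt π * ∫ u in Set.Ioi x, Real.exp (-u ^ 2)

open Set

theorem integral_comp_add_right_Ioi {E : Type*} [NormedAddCommGroup E] [NormedSpace ℝ E]
    (g : ℝ → E) (a c : ℝ) : ∫ x in Ioi a, g (x + c) = ∫ x in Ioi (a + c), g x := by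
  have h := (measurePreserving_add_right volume c).setIntegral_preimage_emb
    (measurableEmbedding_addRight c) g (Ioi (a + c))
  rwa [preimage_add_const_Ioi, add_sub_cancel_right] at h

theorem inv_ofReal_add_I_mul_eq_integral (t : ℝ) {b : ℝ} (hb : 0 < b) :
    ((t : ℂ) + I * b)⁻¹ = -I * ∫ s in Ioi (0 : ℝ), cexp ((I * t - b) * s) := by
  have hfactor : I * t - b = I * (t + I * b) := by ring_nf; rw [I_sq]; ring
  have hne : (t : ℂ) + I * b ≠ 0 := fun h => hb.ne' (by simpa using congrArg im h)
  rw [integral_exp_mul_complex_Ioi (by simpa using hb), hfactor]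
  field_simp
  simp

theorem fourierIntegral_gaussian_ofReal {a : ℝ} (ha : 0 < a) (c : ℝ) :
    ∫ t : ℝ, cexp (-(a ^ 2 * t ^ 2 : ℝ)) * cexp (I * c * t)
      = ((√π / a * Real.exp (-c ^ 2 / (4 * a ^ 2)) : ℝ) : ℂ) := by
  have h := fourierIntegral_gaussian (b := (a : ℂ) ^ 2)
    (by rw [← ofReal_pow, ofReal_re]; positivity) c
  have hsqrt : ((π : ℂ) / (a : ℂ) ^ 2) ^ (1 / 2 : ℂ) = ((√π / a : ℝ) : ℂ) := by
    rw [← ofReal_pow, ← ofReal_div, show (1 / 2 : ℂ) = ((1 / 2 : ℝ) : ℂ) by norm_num,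
      ← ofReal_cpow (by positivity), ← Real.sqrt_eq_rpow, Real.sqrt_div' _ (by positivity),
      Real.sqrt_sq ha.le]
  simp_rw [neg_mul] at h
  simp_rw [mul_comm (cexp _) (cexp (I * c * _)), ofReal_mul, ofReal_pow, h, hsqrt]
  push_cast
  ring_nf

theorem integral_Ioi_exp_neg_mul_mul_exp_neg_sq {a : ℝ} (ha : 0 < a) (b c : ℝ) :
    ∫ s in Ioi (0 : ℝ), Real.exp (-(b * s)) * Real.exp (-(s + c) ^ 2 / (4 * a ^ 2))
      = Real.exp (a ^ 2 * b ^ 2 + b * c) * (2 * a)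
          * ∫ u in Ioi (a * b + c / (2 * a)), Real.exp (-u ^ 2) := by
  have hsq : ∀ s : ℝ, Real.exp (-(b * s)) * Real.exp (-(s + c) ^ 2 / (4 * a ^ 2))
      = Real.exp (a ^ 2 * b ^ 2 + b * c)
          * Real.exp (-(s * (2 * a)⁻¹ + (a * b + c / (2 * a))) ^ 2) := by
    intro s
    rw [← Real.exp_add, ← Real.exp_add]
    congr 1
    field_simp
    ring
  simp_rw [hsq, integral_const_mul, mul_assoc]
  congr 1
  rw [integral_comp_mul_right_Ioi (fun x => Real.exp (-(x + (a * b + c / (2 * a))) ^ 2)) 0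
    (by positivity), integral_comp_add_right_Ioi (fun x => Real.exp (-x ^ 2)), zero_mul,
    zero_add, inv_inv, smul_eq_mul]
  ring

theorem integrable_prod_exp_neg_mul_mul_gaussian_mul_cexp {a b : ℝ} (ha : 0 < a) (hb : 0 < b)
    (c : ℝ) :
    Integrable (fun p : ℝ × ℝ => cexp (-(b * p.2 : ℝ))
        * (cexp (-(a ^ 2 * p.1 ^ 2 : ℝ)) * cexp (I * (p.2 + c : ℝ) * p.1)))
      (volume.prod (volume.restrict (Ioi 0))) := by
  refine Integrable.mono' ((integrable_exp_neg_mul_sq (pow_pos ha 2)).mul_prod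
    (exp_neg_integrableOn_Ioi 0 hb)) (by fun_prop) (.of_forall fun p => le_of_eq ?_)
  simp only [norm_mul, ← ofReal_neg, Complex.norm_exp_ofReal, mul_assoc, ← ofReal_mul,
    norm_exp_I_mul_ofReal, mul_one, neg_mul]
  ring

theorem inv_add_I_mul_mul_gaussian_eq_integral {a b : ℝ} (hb : 0 < b) (c t : ℝ) :
    ((t : ℂ) + I * b)⁻¹ * cexp (-(a ^ 2 * t ^ 2 : ℝ)) * cexp (I * c * t)
      = -I * ∫ s in Ioi (0 : ℝ), cexp (-(b * s : ℝ))
          * (cexp (-(a ^ 2 * t ^ 2 : ℝ)) * cexp (I * (s + c : ℝ) * t)) := by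
  rw [inv_ofReal_add_I_mul_eq_integral t hb, mul_assoc, mul_assoc, ← integral_mul_const]
  congr 1
  refine integral_congr_ae (.of_forall fun s => ?_)
  simp only [← Complex.exp_add]
  congr 1
  push_cast
  ring

/-- The Fourier transform of `h₀(t) = (t+ib)⁻¹ e^{-a²t²}` equals
`-iπ e^{a²b²} e^{2πbw} erfc(ab + πw/a)`. -/
theorem fourier_transform_h0 (a b : ℝ) (ha : 0 < a) (hb : 0 < b) (w : ℝ) :
    (∫ t : ℝ, ((t : ℂ) + I * b)⁻¹ * Complex.exp (-(a ^ 2 * t ^ 2 : ℝ))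
        * Complex.exp (2 * π * I * t * w))
      = -I * π * Complex.exp ((a ^ 2 * b ^ 2 : ℝ)) * Complex.exp ((2 * π * b * w : ℝ))
          * (erfc (a * b + π * w / a) : ℂ) := by
  calc _ = ∫ t : ℝ, -I * ∫ s in Ioi (0 : ℝ), cexp (-(b * s : ℝ))
          * (cexp (-(a ^ 2 * t ^ 2 : ℝ)) * cexp (I * (s + 2 * π * w : ℝ) * t)) := by
        congr 1 with t
        rw [← inv_add_I_mul_mul_gaussian_eq_integral hb (2 * π * w)]
        push_cast
        ring_nf
    _ = -I * ∫ s in Ioi (0 : ℝ), ((√π / a * (Real.exp (-(b * s))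
          * Real.exp (-(s + 2 * π * w) ^ 2 / (4 * a ^ 2))) : ℝ) : ℂ) := by
        rw [integral_const_mul, integral_integral_swap
          (integrable_prod_exp_neg_mul_mul_gaussian_mul_cexp ha hb (2 * π * w))]
        congr 1
        refine setIntegral_congr_fun measurableSet_Ioi fun s _ => ?_
        rw [integral_const_mul, fourierIntegral_gaussian_ofReal ha]
        push_cast
        ring
    _ = _ := by
        rw [integral_complex_ofReal, integral_const_mul,
          integral_Ioi_exp_neg_mul_mul_exp_neg_sq ha,
          show a * b + 2 * π * w / (2 * a) = a * b + π * w / a by field_simp, erfc]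
        have hsqrt : ((√π : ℝ) : ℂ) ^ 2 = π := by
          rw [← ofReal_pow, Real.sq_sqrt pi_pos.le]
        have hsqrt0 : ((√π : ℝ) : ℂ) ≠ 0 := ofReal_ne_zero.2 (Real.sqrt_pos.2 pi_pos).ne'
        have ha0 : (a : ℂ) ≠ 0 := ofReal_ne_zero.2 ha.ne'
        push_cast
        rw [← hsqrt, Complex.exp_add]
        field_simp
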